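/- Let S be a Boolean inverse monoid. The family {U_ψ : ψ ∈ S} is a basis for the topology on 𝒢(S) that it generates; that is, the intersection of any two members of the family is a union of members of the family. -/
import Mathlib


universe u

namespace BIM

class InverseSemigroup (S : Type u) extends Semigroup S, Inv S where
  mul_inv_mul : ∀ φ : S, φ * φ⁻¹ * φ = φ
  inv_mul_inv : ∀ φ : S, φ⁻¹ * φ * φ⁻¹ = φ⁻¹
  inv_unique : ∀ φ ψ : S, φ * ψ * φ = φ → ψ * φ * ψ = ψ → ψ = φ⁻¹

variable {S : Type u}

section InvSg
variable [InverseSemigroup S]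

def cle (φ ψ : S) : Prop := φ = ψ * φ⁻¹ * φ

lemma mim (φ : S) : φ * φ⁻¹ * φ = φ := InverseSemigroup.mul_inv_mul φ
lemma imi (φ : S) : φ⁻¹ * φ * φ⁻¹ = φ⁻¹ := InverseSemigroup.inv_mul_inv φ

lemma inv_inv' (φ : S) : φ⁻¹⁻¹ = φ :=
  (InverseSemigroup.inv_unique φ⁻¹ φ (imi φ) (mim φ)).symm

lemma idem_inv {p : S} (hp : p * p = p) : p⁻¹ = p :=
  (InverseSemigroup.inv_unique p p (by rw [hp, hp]) (by rw [hp, hp])).symm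

lemma inv_mul_idem (φ : S) : (φ⁻¹ * φ) * (φ⁻¹ * φ) = φ⁻¹ * φ := by
  rw [mul_assoc φ⁻¹ φ (φ⁻¹ * φ), ← mul_assoc φ φ⁻¹ φ, mim]

lemma mul_inv_idem (φ : S) : (φ * φ⁻¹) * (φ * φ⁻¹) = φ * φ⁻¹ := by
  rw [mul_assoc φ φ⁻¹ (φ * φ⁻¹), ← mul_assoc φ⁻¹ φ φ⁻¹, imi]

lemma idem_absorb {e : S} (he : e * e = e) (x : S) : e * (e * x) = e * x := by
  rw [← mul_assoc, he]

lemma mul_idem {e f : S} (he : e * e = e) (hf : f * f = f) :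
    (e * f) * (e * f) = e * f := by
  set a := (e * f)⁻¹ with ha
  have k1 : (e * f) * a * (e * f) = e * f := mim (e * f)
  have k2 : a * (e * f) * a = a := imi (e * f)
  have k2x : ∀ x : S, a * (e * (f * (a * x))) = a * x := by
    intro x
    have := congrArg (· * x) k2
    simp only [mul_assoc] at this
    simpa [mul_assoc] using this
  have hme : (e * f) * (f * (a * e)) * (e * f) = e * f := by
    have k1' : e * (f * (a * (e * f))) = e * f := by
      simpa [mul_assoc] using k1
    calc (e * f) * (f * (a * e)) * (e * f)
        = e * (f * (f * (a * (e * (e * f))))) := by simp only [mul_assoc]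
      _ = e * (f * (a * (e * (e * f)))) := by rw [idem_absorb hf]
      _ = e * (f * (a * (e * f))) := by rw [idem_absorb he]
      _ = e * f := k1'
  have hmh : (f * (a * e)) * (e * f) * (f * (a * e)) = f * (a * e) := by
    calc (f * (a * e)) * (e * f) * (f * (a * e))
        = f * (a * (e * (e * (f * (f * (a * e)))))) := by simp only [mul_assoc]
      _ = f * (a * (e * (f * (f * (a * e))))) := by rw [idem_absorb he]
      _ = f * (a * (e * (f * (a * e)))) := by rw [idem_absorb hf]
      _ = f * (a * e) := by rw [k2x]
  have hha : f * (a * e) = a := InverseSemigroup.inv_unique (e * f) (f * (a * e)) hme hmh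
  have hh : (f * (a * e)) * (f * (a * e)) = f * (a * e) := by
    calc (f * (a * e)) * (f * (a * e))
        = f * (a * (e * (f * (a * e)))) := by simp only [mul_assoc]
      _ = f * (a * e) := by rw [k2x]
  have haa : a * a = a := by rw [← hha]; exact hh
  have hefa : e * f = a := by
    rw [← idem_inv haa, ha, inv_inv']
  rw [hefa]; exact haa

lemma idem_comm {e f : S} (he : e * e = e) (hf : f * f = f) : e * f = f * e := by
  have hef : (e * f) * (e * f) = e * f := mul_idem he hf
  have hfe : (f * e) * (f * e) = f * e := mul_idem hf he
  have h1 : (e * f) * (f * e) * (e * f) = e * f := by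
    calc (e * f) * (f * e) * (e * f)
        = e * (f * (f * (e * (e * f)))) := by simp only [mul_assoc]
      _ = e * (f * (e * (e * f))) := by rw [idem_absorb hf]
      _ = e * (f * (e * f)) := by rw [idem_absorb he]
      _ = (e * f) * (e * f) := by simp only [mul_assoc]
      _ = e * f := hef
  have h2 : (f * e) * (e * f) * (f * e) = f * e := by
    calc (f * e) * (e * f) * (f * e)
        = f * (e * (e * (f * (f * e)))) := by simp only [mul_assoc]
      _ = f * (e * (f * (f * e))) := by rw [idem_absorb he]
      _ = f * (e * (f * e)) := by rw [idem_absorb hf]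
      _ = (f * e) * (f * e) := by simp only [mul_assoc]
      _ = f * e := hfe
  have : f * e = (e * f)⁻¹ := InverseSemigroup.inv_unique (e * f) (f * e) h1 h2
  rw [this, idem_inv hef]

lemma conj_idem (φ : S) {p : S} (hp : p * p = p) :
    (φ⁻¹ * p * φ) * (φ⁻¹ * p * φ) = φ⁻¹ * p * φ := by
  have hcomm : p * (φ * φ⁻¹) = (φ * φ⁻¹) * p := idem_comm hp (mul_inv_idem φ)
  calc (φ⁻¹ * p * φ) * (φ⁻¹ * p * φ)
      = φ⁻¹ * (p * (φ * φ⁻¹) * (p * φ)) := by simp only [mul_assoc]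
    _ = φ⁻¹ * ((φ * φ⁻¹) * p * (p * φ)) := by rw [hcomm]
    _ = φ⁻¹ * (φ * φ⁻¹) * (p * (p * φ)) := by simp only [mul_assoc]
    _ = φ⁻¹ * (φ * φ⁻¹) * (p * φ) := by rw [idem_absorb hp]
    _ = φ⁻¹ * (p * φ) := by rw [← mul_assoc φ⁻¹ φ φ⁻¹, imi]
    _ = φ⁻¹ * p * φ := by rw [mul_assoc]

lemma cle_idem_iff {p : S} (q : S) (hp : p * p = p) : cle p q ↔ p = q * p := by
  unfold cle
  rw [idem_inv hp, mul_assoc q p p, hp]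

end InvSg

class InverseSemigroupWithZero (S : Type u) extends InverseSemigroup S, Zero S where
  zero_mul' : ∀ φ : S, 0 * φ = 0
  mul_zero' : ∀ φ : S, φ * 0 = 0

def orth [InverseSemigroupWithZero S] (φ ψ : S) : Prop := φ * ψ⁻¹ = 0 ∧ φ⁻¹ * ψ = 0

class AdditiveInvSemigroup (S : Type u) extends InverseSemigroupWithZero S where
  vsup : S → S → S
  cle_vsup_left : ∀ φ ψ : S, orth φ ψ → cle φ (vsup φ ψ)
  cle_vsup_right : ∀ φ ψ : S, orth φ ψ → cle ψ (vsup φ ψ)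
  vsup_cle : ∀ φ ψ χ : S, orth φ ψ → cle φ χ → cle ψ χ → cle (vsup φ ψ) χ
  mul_vsup : ∀ φ ψ χ : S, orth φ ψ → χ * vsup φ ψ = vsup (χ * φ) (χ * ψ)
  vsup_mul : ∀ φ ψ χ : S, orth φ ψ → vsup φ ψ * χ = vsup (φ * χ) (ψ * χ)

abbrev E (S : Type u) [Mul S] : Type u := {p : S // p * p = p}

class BooleanInverseMonoid (S : Type u) extends AdditiveInvSemigroup S where
  vinf : S → S → S
  vinf_cle_left : ∀ φ ψ : S, cle (vinf φ ψ) φ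
  vinf_cle_right : ∀ φ ψ : S, cle (vinf φ ψ) ψ
  cle_vinf : ∀ φ ψ χ : S, cle χ φ → cle χ ψ → cle χ (vinf φ ψ)
  ba : BooleanAlgebra (E S)
  ba_le_iff : ∀ p q : E S, (letI := ba; p ≤ q) ↔ cle p.1 q.1

instance (priority := 100) instBAE [BooleanInverseMonoid S] : BooleanAlgebra (E S) :=
  BooleanInverseMonoid.ba

lemma ba_le [BooleanInverseMonoid S] (p q : E S) : p ≤ q ↔ cle p.1 q.1 :=
  BooleanInverseMonoid.ba_le_iff p q

section BIMsec
variable [BooleanInverseMonoid S]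

lemma E_le_iff (p q : E S) : p ≤ q ↔ p.1 = q.1 * p.1 := by
  rw [ba_le]; exact cle_idem_iff q.1 p.2

/-- In `E S`, the Boolean-algebra meet is given by the semigroup product. -/
lemma inf_coe (p q : E S) : ((p ⊓ q : E S) : S) = p.1 * q.1 := by
  have hm : (p.1 * q.1) * (p.1 * q.1) = p.1 * q.1 := mul_idem p.2 q.2
  have h1 : (⟨p.1 * q.1, hm⟩ : E S) ≤ p := by
    rw [E_le_iff]
    show p.1 * q.1 = p.1 * (p.1 * q.1)
    rw [← mul_assoc, p.2]
  have h2 : (⟨p.1 * q.1, hm⟩ : E S) ≤ q := by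
    rw [E_le_iff]
    show p.1 * q.1 = q.1 * (p.1 * q.1)
    rw [← mul_assoc, idem_comm q.2 p.2, mul_assoc, q.2]
  have h3 : p ⊓ q ≤ (⟨p.1 * q.1, hm⟩ : E S) := by
    have hp' : (p ⊓ q : E S).1 = p.1 * (p ⊓ q).1 := (E_le_iff _ _).1 inf_le_left
    have hq' : (p ⊓ q : E S).1 = q.1 * (p ⊓ q).1 := (E_le_iff _ _).1 inf_le_right
    rw [E_le_iff]
    show (p ⊓ q : E S).1 = p.1 * q.1 * (p ⊓ q).1
    rw [mul_assoc, ← hq', ← hp']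
  have : p ⊓ q = (⟨p.1 * q.1, hm⟩ : E S) := le_antisymm h3 (le_inf h1 h2)
  exact congrArg Subtype.val this

/-- A character on `E S`: a Boolean algebra homomorphism into the two-element
Boolean algebra. -/
structure Character (S : Type u) [BooleanInverseMonoid S] where
  toFun : E S → Bool
  map_inf' : ∀ p q : E S, toFun (p ⊓ q) = (toFun p && toFun q)
  map_sup' : ∀ p q : E S, toFun (p ⊔ q) = (toFun p || toFun q)
  map_top' : toFun ⊤ = true
  map_bot' : toFun ⊥ = false

lemma Character.ext {x y : Character S} (h : ∀ p, x.toFun p = y.toFun p) : x = y := by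
  cases x; cases y
  congr 1
  funext p
  exact h p

instance : TopologicalSpace (Character S) :=
  TopologicalSpace.induced (fun x : Character S => x.toFun) inferInstance

/-- `Ê(S)_φ`, the set of characters `x` with `x(φ⁻¹φ) = 1`. -/
def EhatAt (φ : S) : Set (Character S) :=
  {x | x.toFun ⟨φ⁻¹ * φ, inv_mul_idem φ⟩ = true}

/-- `α_φ(x)` as a raw function on idempotents: `p ↦ x(φ⁻¹ p φ)`. -/
def alphaFun (φ : S) (x : Character S) : E S → Bool :=
  fun p => x.toFun ⟨φ⁻¹ * p.1 * φ, conj_idem φ p.2⟩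

/-- The underlying set `S ∗ Ê(S)` of pairs `(φ, x)` with `x ∈ Ê(S)_φ`. -/
abbrev SStar (S : Type u) [BooleanInverseMonoid S] : Type u :=
  {z : S × Character S // z.2 ∈ EhatAt z.1}

/-- The equivalence relation defining `𝒢(S)`. -/
def rel (a b : SStar S) : Prop :=
  a.1.2 = b.1.2 ∧ ∃ p : E S, a.1.2.toFun p = true ∧ a.1.1 * p.1 = b.1.1 * p.1

lemma rel_equivalence : Equivalence (rel (S := S)) := by
  constructor
  · intro a
    exact ⟨rfl, ⟨⊤, a.1.2.map_top', rfl⟩⟩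
  · rintro a b ⟨hxy, p, hp1, hp2⟩
    exact ⟨hxy.symm, p, by rw [← hxy]; exact hp1, hp2.symm⟩
  · rintro a b c ⟨hxy, p, hp1, hp2⟩ ⟨hyz, q, hq1, hq2⟩
    refine ⟨hxy.trans hyz, ⟨⟨p.1 * q.1, mul_idem p.2 q.2⟩, ?_, ?_⟩⟩
    · have : (⟨p.1 * q.1, mul_idem p.2 q.2⟩ : E S) = p ⊓ q :=
        Subtype.ext (inf_coe p q).symm
      rw [this, a.1.2.map_inf', hp1]
      rw [hxy]
      rw [hq1]
      rfl
    · show a.1.1 * (p.1 * q.1) = c.1.1 * (p.1 * q.1)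
      have h1 : a.1.1 * (p.1 * q.1) = b.1.1 * (p.1 * q.1) := by
        rw [← mul_assoc, hp2, mul_assoc]
      have h2 : b.1.1 * (p.1 * q.1) = c.1.1 * (p.1 * q.1) := by
        rw [idem_comm p.2 q.2, ← mul_assoc, hq2, mul_assoc]
      rw [h1, h2]

instance gpdSetoid (S : Type u) [BooleanInverseMonoid S] : Setoid (SStar S) :=
  ⟨rel, rel_equivalence⟩

/-- The groupoid `𝒢(S)` as a set: the quotient of `S ∗ Ê(S)` by `∼`. -/
def Gpd (S : Type u) [BooleanInverseMonoid S] : Type u := Quotient (gpdSetoid S)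

/-- The class `[φ, x]` in `𝒢(S)`. -/
def mk (φ : S) (x : Character S) (hx : x ∈ EhatAt φ) : Gpd S :=
  Quotient.mk (gpdSetoid S) ⟨(φ, x), hx⟩

/-- The basic set `U_φ = {[φ, x] : x ∈ Ê(S)_φ}`. -/
def U (φ : S) : Set (Gpd S) := {g | ∃ (x : Character S) (hx : x ∈ EhatAt φ), g = mk φ x hx}

/-- The topology on `𝒢(S)` generated by the sets `U_φ`. -/
instance : TopologicalSpace (Gpd S) :=
  TopologicalSpace.generateFrom {V : Set (Gpd S) | ∃ φ : S, V = U φ}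

end BIMsec

end BIM


open BIM

section Aux
variable {S : Type u} [BooleanInverseMonoid S]

lemma mul_inv_rev' (a b : S) : (a * b)⁻¹ = b⁻¹ * a⁻¹ := by
  have hcomm : (b * b⁻¹) * (a⁻¹ * a) = (a⁻¹ * a) * (b * b⁻¹) :=
    idem_comm (mul_inv_idem b) (inv_mul_idem a)
  have h1 : (a * b) * (b⁻¹ * a⁻¹) * (a * b) = a * b := by
    calc (a * b) * (b⁻¹ * a⁻¹) * (a * b)
        = a * ((b * b⁻¹) * (a⁻¹ * a)) * b := by simp only [mul_assoc]
      _ = a * ((a⁻¹ * a) * (b * b⁻¹)) * b := by rw [hcomm]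
      _ = (a * a⁻¹ * a) * (b * b⁻¹ * b) := by simp only [mul_assoc]
      _ = a * b := by rw [mim, mim]
  have h2 : (b⁻¹ * a⁻¹) * (a * b) * (b⁻¹ * a⁻¹) = b⁻¹ * a⁻¹ := by
    calc (b⁻¹ * a⁻¹) * (a * b) * (b⁻¹ * a⁻¹)
        = b⁻¹ * ((a⁻¹ * a) * (b * b⁻¹)) * a⁻¹ := by simp only [mul_assoc]
      _ = b⁻¹ * ((b * b⁻¹) * (a⁻¹ * a)) * a⁻¹ := by rw [hcomm]
      _ = (b⁻¹ * b * b⁻¹) * (a⁻¹ * a * a⁻¹) := by simp only [mul_assoc]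
      _ = b⁻¹ * a⁻¹ := by rw [imi, imi]
  exact (InverseSemigroup.inv_unique (a * b) (b⁻¹ * a⁻¹) h1 h2).symm

lemma key_val (φ : S) (p : E S) : (φ * p.1)⁻¹ * (φ * p.1) = (φ⁻¹ * φ) * p.1 := by
  have hcomm : p.1 * (φ⁻¹ * φ) = (φ⁻¹ * φ) * p.1 := idem_comm p.2 (inv_mul_idem φ)
  calc (φ * p.1)⁻¹ * (φ * p.1)
      = p.1⁻¹ * φ⁻¹ * (φ * p.1) := by rw [mul_inv_rev']
    _ = p.1 * (φ⁻¹ * φ) * p.1 := by rw [idem_inv p.2]; simp only [mul_assoc]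
    _ = (φ⁻¹ * φ) * p.1 * p.1 := by rw [hcomm]
    _ = (φ⁻¹ * φ) * p.1 := by rw [mul_assoc, p.2]

lemma key_E (φ : S) (p : E S) :
    (⟨(φ * p.1)⁻¹ * (φ * p.1), inv_mul_idem _⟩ : E S)
      = ⟨φ⁻¹ * φ, inv_mul_idem φ⟩ ⊓ p := by
  apply Subtype.ext
  rw [inf_coe]
  exact key_val φ p

lemma absorb_val (φ : S) (p : E S) :
    (φ * p.1) * ((φ⁻¹ * φ) * p.1) = φ * ((φ⁻¹ * φ) * p.1) := by
  have hcomm : p.1 * (φ⁻¹ * φ) = (φ⁻¹ * φ) * p.1 := idem_comm p.2 (inv_mul_idem φ)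
  have hl : (φ * p.1) * ((φ⁻¹ * φ) * p.1) = φ * p.1 := by
    calc (φ * p.1) * ((φ⁻¹ * φ) * p.1)
        = φ * (p.1 * (φ⁻¹ * φ)) * p.1 := by simp only [mul_assoc]
      _ = φ * ((φ⁻¹ * φ) * p.1) * p.1 := by rw [hcomm]
      _ = (φ * φ⁻¹ * φ) * (p.1 * p.1) := by simp only [mul_assoc]
      _ = φ * p.1 := by rw [mim, p.2]
  have hr : φ * ((φ⁻¹ * φ) * p.1) = φ * p.1 := by
    rw [← mul_assoc, ← mul_assoc, mim]
  rw [hl, hr]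

lemma char_le {x : Character S} {p q : E S} (h : p ≤ q) (hp : x.toFun p = true) :
    x.toFun q = true := by
  have h1 : p ⊓ q = p := inf_eq_left.2 h
  have h2 := x.map_inf' p q
  rw [h1, hp] at h2
  simpa using h2.symm

end Aux

/-- The family {U_ψ : ψ ∈ S} is a basis for the topology on 𝒢(S)
that it generates. -/
theorem stmt10 {S : Type u} [BooleanInverseMonoid S] :
    TopologicalSpace.IsTopologicalBasis {V : Set (Gpd S) | ∃ φ : S, V = U φ} := by
  refine ⟨?_, ?_, rfl⟩
  · rintro t₁ ⟨φ, rfl⟩ t₂ ⟨ψ, rfl⟩ g ⟨⟨x, hx, rfl⟩, ⟨y, hy, hg2⟩⟩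
    obtain ⟨hxy, p, hp, hpe⟩ := Quotient.exact hg2
    simp only at hxy hpe
    -- the new basic set
    refine ⟨U (φ * p.1), ⟨φ * p.1, rfl⟩, ?_, ?_⟩
    · -- membership: mk φ x hx ∈ U (φ * p.1)
      have hx' : x ∈ EhatAt (φ * p.1) := by
        show x.toFun ⟨(φ * p.1)⁻¹ * (φ * p.1), inv_mul_idem _⟩ = true
        rw [key_E, x.map_inf', hx, hp]; rfl
      refine ⟨x, hx', ?_⟩
      apply Quotient.sound
      exact ⟨rfl, p, hp, by show φ * p.1 = (φ * p.1) * p.1; rw [mul_assoc, p.2]⟩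
    · -- U (φ * p.1) ⊆ U φ ∩ U ψ
      rintro g' ⟨z, hz, rfl⟩
      have hz' : z.toFun (⟨φ⁻¹ * φ, inv_mul_idem φ⟩ ⊓ p) = true := by
        rw [← key_E]; exact hz
      have hze : z.toFun ⟨φ⁻¹ * φ, inv_mul_idem φ⟩ = true :=
        char_le inf_le_left hz'
      have hzψ' : z.toFun (⟨ψ⁻¹ * ψ, inv_mul_idem ψ⟩ ⊓ p) = true := by
        rw [← key_E]
        show z.toFun ⟨(ψ * p.1)⁻¹ * (ψ * p.1), inv_mul_idem _⟩ = true
        simp only [← hpe]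
        exact hz
      have hzeψ : z.toFun ⟨ψ⁻¹ * ψ, inv_mul_idem ψ⟩ = true :=
        char_le inf_le_left hzψ'
      constructor
      · refine ⟨z, hze, ?_⟩
        apply Quotient.sound
        refine ⟨rfl, ⟨φ⁻¹ * φ, inv_mul_idem φ⟩ ⊓ p, hz', ?_⟩
        show (φ * p.1) * ((⟨φ⁻¹ * φ, inv_mul_idem φ⟩ ⊓ p : E S) : S)
            = φ * ((⟨φ⁻¹ * φ, inv_mul_idem φ⟩ ⊓ p : E S) : S)
        rw [inf_coe]
        exact absorb_val φ p
      · have hzψ : z ∈ EhatAt (ψ * p.1) := by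
          show z.toFun ⟨(ψ * p.1)⁻¹ * (ψ * p.1), inv_mul_idem _⟩ = true
          rw [key_E]; exact hzψ'
        have hmk : mk (φ * p.1) z hz = mk (ψ * p.1) z hzψ := by
          apply Quotient.sound
          exact ⟨rfl, ⊤, z.map_top', by simp only [hpe]⟩
        refine ⟨z, hzeψ, ?_⟩
        rw [hmk]
        apply Quotient.sound
        refine ⟨rfl, ⟨ψ⁻¹ * ψ, inv_mul_idem ψ⟩ ⊓ p, hzψ', ?_⟩
        show (ψ * p.1) * ((⟨ψ⁻¹ * ψ, inv_mul_idem ψ⟩ ⊓ p : E S) : S)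
            = ψ * ((⟨ψ⁻¹ * ψ, inv_mul_idem ψ⟩ ⊓ p : E S) : S)
        rw [inf_coe]
        exact absorb_val ψ p
  · ext g
    simp only [Set.mem_sUnion, Set.mem_univ, iff_true, Set.mem_setOf_eq]
    obtain ⟨⟨⟨φ, x⟩, hx⟩, rfl⟩ := Quotient.exists_rep g
    exact ⟨U φ, ⟨φ, rfl⟩, x, hx, rfl⟩
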